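/- Let H be a finite group generated by e elements, p a prime, and V a simple ℤ_p[H]-module. Then there exist a finite group Ĥ generated by e elements and a surjective homomorphism π: Ĥ → H whose kernel is abelian of exponent dividing p and, as ℤ_p[H]-module via conjugation, V-homogeneous, such that for every finite group L generated by e elements and every surjective homomorphism τ: L → H whose kernel is abelian of exponent dividing p and V-homogeneous as ℤ_p[H]-module via conjugation, there exists a surjective homomorphism σ: Ĥ → L with τ ∘ σ = π. -/

import Mathlib

/-- A right action of the group `H` on the additive group `V` by additive maps,
written `v^h = ρ.act h v`. Together with a `ZMod p`-module structure on `V` this is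
exactly a right `ℤ_p[H]`-module structure. -/
structure RAction (H V : Type) [Group H] [AddCommGroup V] where
  act : H → V →+ V
  act_one : act 1 = AddMonoidHom.id V
  act_mul : ∀ g h : H, act (g * h) = (act h).comp (act g)

namespace RAction

variable {H V : Type} [Group H] [AddCommGroup V]

theorem act_act (ρ : RAction H V) (g h : H) (v : V) :
    ρ.act h (ρ.act g v) = ρ.act (g * h) v := by rw [ρ.act_mul]; rfl

theorem act_one_apply (ρ : RAction H V) (v : V) : ρ.act 1 v = v := by rw [ρ.act_one]; rfl

theorem act_smul {p : ℕ} [Module (ZMod p) V] (ρ : RAction H V) (h : H) (r : ZMod p) (v : V) :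
    ρ.act h (r • v) = r • ρ.act h v := by
  obtain ⟨k, rfl⟩ := ZMod.intCast_surjective r
  exact map_intCast_smul (ρ.act h) (ZMod p) (ZMod p) k v

/-- The diagonal right action on `V × V`. -/
def prodSelf (ρ : RAction H V) : RAction H (V × V) where
  act h := (ρ.act h).prodMap (ρ.act h)
  act_one := by ext x <;> simp [ρ.act_one]
  act_mul g h := by ext x <;> simp [ρ.act_mul]

end RAction

/-- The kernel of `π : E → H` is, via the conjugation action, a `V`-homogeneous module:
it admits an additive bijection with a finite direct sum `V^m` of copies of `V` that is
`H`-equivariant (conjugation by `g` corresponds to the action of `π g`). -/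
def IsVHomog {H V E : Type} [Group H] [AddCommGroup V] [Group E]
    (ρ : RAction H V) (π : E →* H) : Prop :=
  ∃ (m : ℕ) (φ : π.ker ≃ (Fin m → V)),
    (∀ a b : π.ker, φ (a * b) = φ a + φ b) ∧
    ∀ (g : E) (k : π.ker),
      φ ⟨g⁻¹ * (k : E) * g, by
          simpa using (MonoidHom.normal_ker π).conj_mem (k : E) k.2 g⁻¹⟩
        = fun i => ρ.act (π g) (φ k i)

/-- A finite `e`-generated extension of `H` with a `V`-homogeneous kernel. -/
structure VHomogExtension (e p : ℕ) (H V : Type) [Group H] [AddCommGroup V]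
    (ρ : RAction H V) where
  carrier : Type
  [grp : Group carrier]
  [fin : Finite carrier]
  proj : carrier →* H
  gen : ∃ f : Fin e → carrier, Subgroup.closure (Set.range f) = ⊤
  surj : Function.Surjective proj
  ker_comm : ∀ a b : proj.ker, a * b = b * a
  ker_exp : ∀ g : proj.ker, g ^ p = 1
  homog : IsVHomog ρ proj

attribute [instance] VHomogExtension.grp VHomogExtension.fin

/-!
Among the finite `e`-generated extensions of `H` with `V`-homogeneous kernel, whose orders are
bounded by `|H| p ^ (|H| e)` because Schreier's lemma bounds the number of generators of the
kernel, choose one, `Ĥ → H`, of maximal order. Given another one, `τ : L → H`, Gaschütz's lemma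
lifts the images in `H` of generators `xᵢ` of `Ĥ` to generators `yᵢ` of `L`. The subgroup
`D ≤ Ĥ × L` generated by the pairs `(xᵢ, yᵢ)` lies over `H`, so its kernel embeds into a sum of
copies of `V`; a submodule of a semisimple `V`-isotypic module is again `V`-homogeneous, so
`D → H` competes with `Ĥ`. By maximality the projection `D → Ĥ` is an isomorphism, and `σ` is
the projection to `L` composed with its inverse.
-/

open Subgroup Function

theorem closure_range_comp_eq_top {G K ι : Type*} [Group G] [Group K] {π : G →* K}
    (hπ : Surjective π) {x : ι → G} (hx : closure (Set.range x) = ⊤) :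
    closure (Set.range (π ∘ x)) = ⊤ := by
  rw [Set.range_comp, ← MonoidHom.map_closure, hx, ← MonoidHom.range_eq_map,
    MonoidHom.range_eq_top.mpr hπ]

section Gaschutz

open scoped Classical
open Finset
open Set (range range_comp range_subset_iff)

variable {G K ι : Type*} [Group G] [Fintype G] [Group K] [Fintype ι] (π : G →* K)

noncomputable def numGeneratingLifts (M : Subgroup G) (h : ι → K) : ℕ :=
  #{x : ι → G | π ∘ x = h ∧ closure (range x) = M}

theorem card_lifts_le_eq_sum (M : Subgroup G) (h : ι → K) :
    #{x : ι → G | π ∘ x = h ∧ closure (range x) ≤ M} =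
      ∑ N ∈ {N | N ≤ M}, numGeneratingLifts π N h := by
  rw [card_eq_sum_card_fiberwise (f := fun x => Subgroup.closure (range x)) (t := {N | N ≤ M})
    (fun x hx => by simp_all)]
  refine sum_congr rfl fun N hN => congrArg card ?_
  ext x
  simp only [mem_filter, mem_univ, true_and] at hN ⊢
  constructor
  · rintro ⟨hx, rfl⟩; exact ⟨hx.1, rfl⟩
  · rintro ⟨hx, rfl⟩; exact ⟨⟨hx, hN⟩, rfl⟩

theorem card_lifts_le_congr {M : Subgroup G} (hM : M.map π = ⊤) (h h' : ι → K) :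
    #{x : ι → G | π ∘ x = h ∧ closure (range x) ≤ M} =
      #{x : ι → G | π ∘ x = h' ∧ closure (range x) ≤ M} := by
  have hlift (k : ι → K) : ∃ a : ι → G, (∀ i, a i ∈ M) ∧ π ∘ a = k := by
    choose a ha using fun i => (hM ▸ mem_top (k i) : k i ∈ M.map π)
    exact ⟨a, fun i => (ha i).1, funext fun i => (ha i).2⟩
  obtain ⟨a, haM, rfl⟩ := hlift h
  obtain ⟨a', ha'M, rfl⟩ := hlift h'
  simp only [closure_le, range_subset_iff, SetLike.mem_coe]
  refine card_nbij' (· * a⁻¹ * a') (· * a'⁻¹ * a) ?_ ?_ ?_ ?_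
  · intro x hx
    simp only [coe_filter, mem_univ, true_and, Set.mem_ofPred_eq] at hx ⊢
    refine ⟨?_, fun i => mul_mem (mul_mem (hx.2 i) (inv_mem (haM i))) (ha'M i)⟩
    ext i; simp [show π (x i) = _ from congrFun hx.1 i]
  · intro x hx
    simp only [coe_filter, mem_univ, true_and, Set.mem_ofPred_eq] at hx ⊢
    refine ⟨?_, fun i => mul_mem (mul_mem (hx.2 i) (inv_mem (ha'M i))) (haM i)⟩
    ext i; simp [show π (x i) = _ from congrFun hx.1 i]
  · intro x _; simp
  · intro x _; simp

theorem map_eq_top_of_numGeneratingLifts_ne_zero {M : Subgroup G} {h : ι → K}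
    (hh : closure (range h) = ⊤) (hM : numGeneratingLifts π M h ≠ 0) : M.map π = ⊤ := by
  obtain ⟨x, hx⟩ := card_ne_zero.mp hM
  simp only [mem_filter, mem_univ, true_and] at hx
  rw [← hx.2, MonoidHom.map_closure, ← range_comp, hx.1, hh]

/-- Gaschütz's counting argument: if `M` maps onto `K`, the lifts of `h` inside `M`, sorted by
the subgroup `N ≤ M` they generate, are as many for every `h`; otherwise none generates `M`. -/
theorem numGeneratingLifts_congr {h h' : ι → K} (hh : closure (range h) = ⊤)
    (hh' : closure (range h') = ⊤) (M : Subgroup G) :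
    numGeneratingLifts π M h = numGeneratingLifts π M h' := by
  induction M using WellFoundedLT.induction with
  | ind M ih =>
  by_cases hM : M.map π = ⊤
  · have key := card_lifts_le_congr π hM h h'
    rw [card_lifts_le_eq_sum, card_lifts_le_eq_sum,
      ← add_sum_erase _ _ (by simp : M ∈ ({N | N ≤ M} : Finset _)),
      ← add_sum_erase _ _ (by simp : M ∈ ({N | N ≤ M} : Finset _)),
      sum_congr rfl fun N hN => ih N ?_] at key
    · exact Nat.add_right_cancel key
    · simp only [mem_erase, mem_filter, mem_univ, true_and] at hN
      exact lt_of_le_of_ne hN.2 hN.1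
  · rw [not_not.mp (mt (map_eq_top_of_numGeneratingLifts_ne_zero π hh) hM),
      not_not.mp (mt (map_eq_top_of_numGeneratingLifts_ne_zero π hh') hM)]

end Gaschutz

theorem exists_generating_lift {G K ι : Type*} [Group G] [Finite G] [Group K] [Fintype ι]
    {π : G →* K} (hπ : Surjective π) {x₀ : ι → G}
    (hx₀ : closure (Set.range x₀) = ⊤) {h : ι → K} (hh : closure (Set.range h) = ⊤) :
    ∃ x : ι → G, π ∘ x = h ∧ closure (Set.range x) = ⊤ := by
  have := Fintype.ofFinite G
  have hpos : numGeneratingLifts π ⊤ (π ∘ x₀) ≠ 0 :=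
    Finset.card_ne_zero.mpr ⟨x₀, by simp [hx₀]⟩
  rw [numGeneratingLifts_congr π (closure_range_comp_eq_top hπ hx₀) hh] at hpos
  obtain ⟨x, hx⟩ := Finset.card_ne_zero.mp hpos
  exact ⟨x, by simpa using hx⟩

theorem card_le_pow_of_closure_eq_top {K : Type*} [CommGroup K] {n : ℕ} (hn : 0 < n)
    (hK : ∀ g : K, g ^ n = 1) {s : Finset K} (hs : closure (s : Set K) = ⊤) :
    Nat.card K ≤ n ^ s.card := by
  have hsurj : Surjective fun a : s → Fin n => ∏ i : s, (i : K) ^ (a i : ℕ) := by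
    intro x
    obtain ⟨a, rfl⟩ := mem_closure_iff_of_fintype.mp (hs ▸ mem_top x)
    have hmod (i : s) : 0 ≤ a i % n ∧ a i % n < n :=
      ⟨Int.emod_nonneg _ (by omega), Int.emod_lt_of_pos _ (by omega)⟩
    refine ⟨fun i => ⟨(a i % n).toNat, by have := hmod i; omega⟩,
      Finset.prod_congr rfl fun i _ => ?_⟩
    rw [zpow_eq_zpow_emod' (a i) (hK i), ← zpow_natCast, Int.toNat_of_nonneg (hmod i).1]
  calc Nat.card K ≤ Nat.card (s → Fin n) := Nat.card_le_card_of_surjective _ hsurj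
    _ = n ^ s.card := by simp [Nat.card_fun]

theorem card_le_of_ker_commute_pow_eq_one {E H : Type*} [Group E] [Group H] [Finite E]
    {π : E →* H} (hπ : Surjective π) {n : ℕ} (hn : 0 < n)
    (hcomm : ∀ a b : π.ker, a * b = b * a) (hexp : ∀ k : π.ker, k ^ n = 1)
    {ι : Type*} [Fintype ι] {f : ι → E} (hf : closure (Set.range f) = ⊤) :
    Nat.card E ≤ Nat.card H * n ^ (Nat.card H * Fintype.card ι) := by
  classical
  have hindex : π.ker.index = Nat.card H := by
    rw [index_ker, MonoidHom.range_eq_top.mpr hπ, card_top]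
  obtain ⟨T, hT, hTgen⟩ := π.ker.exists_finset_card_le_mul (S := Finset.univ.image f)
    (by simpa using hf)
  let : CommGroup π.ker := { mul_comm := hcomm }
  have hTcard : T.card ≤ Nat.card H * Fintype.card ι :=
    hT.trans (hindex ▸ Nat.mul_le_mul_left _ Finset.card_image_le)
  calc Nat.card E = Nat.card H * Nat.card π.ker := by
        rw [← π.ker.card_mul_index, hindex, mul_comm]
    _ ≤ Nat.card H * n ^ (Nat.card H * Fintype.card ι) :=
        Nat.mul_le_mul_left _ ((card_le_pow_of_closure_eq_top hn hexp hTgen).trans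
          (Nat.pow_le_pow_right hn hTcard))

section Pairs
variable {A B H ι : Type*} [Group A] [Group B] [Group H]

theorem closure_pairs_le_eqLocus {fA : A →* H} {fB : B →* H} {x : ι → A} {y : ι → B}
    (hxy : fA ∘ x = fB ∘ y) :
    closure (Set.range fun i => (x i, y i)) ≤
      (fA.comp (MonoidHom.fst A B)).eqLocus (fB.comp (MonoidHom.snd A B)) :=
  (closure_le _).mpr (Set.range_subset_iff.mpr fun i => congrFun hxy i)

theorem map_fst_closure_pairs (x : ι → A) (y : ι → B) :
    (closure (Set.range fun i => (x i, y i))).map (MonoidHom.fst A B) = closure (Set.range x) := by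
  rw [MonoidHom.map_closure, ← Set.range_comp]
  rfl

theorem map_snd_closure_pairs (x : ι → A) (y : ι → B) :
    (closure (Set.range fun i => (x i, y i))).map (MonoidHom.snd A B) = closure (Set.range y) := by
  rw [MonoidHom.map_closure, ← Set.range_comp]
  rfl

theorem Subgroup.surjective_restrict_of_map_eq_top {K : Subgroup A} {f : A →* B}
    (hK : K.map f = ⊤) : Surjective (f.comp K.subtype) := fun b => by
  obtain ⟨a, ha, rfl⟩ := hK ▸ mem_top b
  exact ⟨⟨a, ha⟩, rfl⟩

theorem exists_generating_tuple_closure_range (x : ι → A) :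
    ∃ f : ι → closure (Set.range x), closure (Set.range f) = ⊤ := by
  refine ⟨fun i => ⟨x i, subset_closure (Set.mem_range_self i)⟩, ?_⟩
  convert closure_preimage_eq_top (Set.range x)
  ext ⟨z, hz⟩
  simp [Subtype.ext_iff]

end Pairs

section Isotypic
variable {R V : Type*} [Ring R] [AddCommGroup V] [Module R V] [IsSimpleModule R V]

theorem isIsotypicOfType_pi (ι : Type*) : IsIsotypicOfType R (ι → V) V := by
  intro m _
  have := IsSimpleModule.nontrivial R m
  obtain ⟨y, hy⟩ := exists_ne (0 : m)
  obtain ⟨i, hi⟩ := Function.ne_iff.mp (Subtype.coe_ne_coe.mpr hy)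
  have hf : (LinearMap.proj i).comp m.subtype ≠ 0 := fun h => hi (LinearMap.congr_fun h y)
  exact ⟨LinearEquiv.ofBijective _ (LinearMap.bijective_of_ne_zero hf)⟩

theorem Submodule.exists_linearEquiv_fun_of_pi {ι : Type*} [Finite ι] (W : Submodule R (ι → V))
    [Module.Finite R W] : ∃ k : ℕ, Nonempty (W ≃ₗ[R] (Fin k → V)) :=
  ((isIsotypicOfType_pi ι).of_injective W.subtype W.injective_subtype).linearEquiv_fun

end Isotypic

namespace RAction
variable {H V : Type} [Group H] [AddCommGroup V] (ρ : RAction H V)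

def IsSimple (p : ℕ) [Module (ZMod p) V] : Prop :=
  (∃ v : V, v ≠ 0) ∧ ∀ W : Submodule (ZMod p) V, (∀ h : H, ∀ w ∈ W, ρ.act h w ∈ W) → W = ⊥ ∨ W = ⊤

def toEnd : Hᵐᵒᵖ →* Module.End ℤ V where
  toFun h := (ρ.act h.unop).toIntLinearMap
  map_one' := by ext v; exact ρ.act_one_apply v
  map_mul' a b := by ext v; exact (ρ.act_act b.unop a.unop v).symm

/-- A right action of `H` is a left action of `Hᵐᵒᵖ`; over `ℤ`, the submodules for this
structure are exactly the `ρ`-stable additive subgroups. -/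
noncomputable abbrev module : Module (MonoidAlgebra ℤ Hᵐᵒᵖ) V :=
  Module.compHom V (MonoidAlgebra.lift ℤ (Module.End ℤ V) Hᵐᵒᵖ ρ.toEnd).toRingHom

theorem of_smul (h : H) (v : V) :
    letI := ρ.module
    MonoidAlgebra.of ℤ Hᵐᵒᵖ (MulOpposite.op h) • v = ρ.act h v := by
  change MonoidAlgebra.lift ℤ (Module.End ℤ V) Hᵐᵒᵖ ρ.toEnd (MonoidAlgebra.of ℤ _ _) v = _
  rw [MonoidAlgebra.lift_of]
  rfl

end RAction

section IsVHomog
variable {H V : Type} [Group H] [AddCommGroup V] {ρ : RAction H V}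

theorem IsVHomog.mul_comm {E : Type} [Group E] {π : E →* H} (hπ : IsVHomog ρ π)
    (a b : π.ker) : a * b = b * a := by
  obtain ⟨m, φ, hφ_mul, -⟩ := hπ
  exact φ.injective (by rw [hφ_mul, hφ_mul, add_comm])

theorem IsVHomog.pow_eq_one {p : ℕ} [Module (ZMod p) V] {E : Type} [Group E] {π : E →* H}
    (hπ : IsVHomog ρ π) (k : π.ker) : k ^ p = 1 := by
  obtain ⟨m, φ, hφ_mul, -⟩ := hπ
  let f : π.ker →* Multiplicative (Fin m → V) := MonoidHom.mk' (.ofAdd ∘ φ) hφ_mul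
  have hφ : ∀ k, φ k = (f k).toAdd := fun _ => rfl
  refine φ.injective ?_
  rw [hφ, hφ, map_pow, map_one, toAdd_pow, toAdd_one, ← Nat.cast_smul_eq_nsmul (ZMod p),
    ZMod.natCast_self, zero_smul]

theorem RAction.IsSimple.isSimpleModule {p : ℕ} [Module (ZMod p) V] (hρ : ρ.IsSimple p) :
    letI := ρ.module
    IsSimpleModule (MonoidAlgebra ℤ Hᵐᵒᵖ) V := by
  let := ρ.module
  obtain ⟨⟨v, hv⟩, hsimple⟩ := hρ
  have : Nontrivial V := ⟨⟨v, 0, hv⟩⟩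
  refine { toIsSimpleOrder := { eq_bot_or_eq_top := fun N => ?_ } }
  have hN : ∀ h : H, ∀ w ∈ AddSubgroup.toZModSubmodule p N.toAddSubgroup, ρ.act h w ∈ _ :=
    fun h w hw => ρ.of_smul h w ▸ N.smul_mem _ hw
  rcases hsimple _ hN with hbot | htop
  · exact .inl (Submodule.ext fun x => SetLike.ext_iff.mp hbot x)
  · exact .inr (Submodule.ext fun x => SetLike.ext_iff.mp htop x)

theorem IsVHomog.of_injective {p : ℕ} [Module (ZMod p) V] (hρ : ρ.IsSimple p) {E : Type}
    [Group E] [Finite E] {π : E →* H} (hπ : Surjective π) {ι : Type} [Finite ι]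
    (θ : π.ker → ι → V) (hθ_mul : ∀ a b, θ (a * b) = θ a + θ b) (hθ_inj : Injective θ)
    (hθ_conj : ∀ (g : E) (k : π.ker) (hk : g⁻¹ * (k : E) * g ∈ π.ker),
      θ ⟨g⁻¹ * k * g, hk⟩ = fun i => ρ.act (π g) (θ k i)) :
    IsVHomog ρ π := by
  let := ρ.module
  have := hρ.isSimpleModule
  let θ' : Additive π.ker →+ (ι → V) := AddMonoidHom.mk' (θ ∘ Additive.toMul) hθ_mul
  have hconj_mem (g : E) (k : π.ker) : g⁻¹ * (k : E) * g ∈ π.ker := by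
    simpa using π.normal_ker.conj_mem _ k.2 g⁻¹
  let W : Submodule (MonoidAlgebra ℤ Hᵐᵒᵖ) (ι → V) :=
    MonoidAlgebra.submoduleOfSMulMem θ'.range.toIntSubmodule fun h v ⟨k, hk⟩ => by
      obtain ⟨g, hg⟩ := hπ h.unop
      refine ⟨Additive.ofMul ⟨_, hconj_mem g k.toMul⟩, ?_⟩
      rw [← hk, ← MulOpposite.op_unop h]
      funext i
      rw [Pi.smul_apply, ρ.of_smul, ← hg]
      exact congrFun (hθ_conj g _ _) i
  have : Finite W := (Set.finite_range θ').to_subtype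
  obtain ⟨m, ⟨ψ⟩⟩ := W.exists_linearEquiv_fun_of_pi
  let toW : π.ker → W := fun k => ⟨θ k, Additive.ofMul k, rfl⟩
  have htoW : Bijective toW :=
    ⟨fun a b hab => hθ_inj (congrArg Subtype.val hab), fun ⟨_, k, hk⟩ => ⟨k.toMul, Subtype.ext hk⟩⟩
  refine ⟨m, (Equiv.ofBijective toW htoW).trans ψ.toEquiv, fun a b => ?_, fun g k => ?_⟩
  · change ψ (toW (a * b)) = ψ (toW a) + ψ (toW b)
    rw [← map_add]
    exact congrArg ψ (Subtype.ext (hθ_mul a b))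
  · have hconj : toW ⟨g⁻¹ * k * g, hconj_mem g k⟩ =
        MonoidAlgebra.of ℤ Hᵐᵒᵖ (.op (π g)) • toW k :=
      Subtype.ext ((hθ_conj g k _).trans (funext fun i => (ρ.of_smul (π g) (θ k i)).symm))
    change ψ (toW _) = fun i => ρ.act (π g) (ψ (toW k) i)
    rw [hconj, map_smul]
    funext i
    exact ρ.of_smul (π g) _

theorem IsVHomog.comp_fst_of_le_eqLocus {p : ℕ} [Module (ZMod p) V] (hρ : ρ.IsSimple p)
    {E₁ E₂ : Type} [Group E₁] [Group E₂] [Finite E₁] [Finite E₂] {π₁ : E₁ →* H} {π₂ : E₂ →* H}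
    (h₁ : IsVHomog ρ π₁) (h₂ : IsVHomog ρ π₂) {D : Subgroup (E₁ × E₂)}
    (hD : D ≤ (π₁.comp (MonoidHom.fst E₁ E₂)).eqLocus (π₂.comp (MonoidHom.snd E₁ E₂)))
    (hsurj : Surjective (π₁.comp ((MonoidHom.fst E₁ E₂).comp D.subtype))) :
    IsVHomog ρ (π₁.comp ((MonoidHom.fst E₁ E₂).comp D.subtype)) := by
  set π := π₁.comp ((MonoidHom.fst E₁ E₂).comp D.subtype)
  obtain ⟨m₁, φ₁, hφ₁_mul, hφ₁_conj⟩ := h₁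
  obtain ⟨m₂, φ₂, hφ₂_mul, hφ₂_conj⟩ := h₂
  have hker₁ (k : π.ker) : (k : E₁ × E₂).1 ∈ π₁.ker := k.2
  have hker₂ (k : π.ker) : (k : E₁ × E₂).2 ∈ π₂.ker :=
    (MonoidHom.mem_ker).mpr ((hD k.1.2).symm.trans k.2)
  refine .of_injective hρ hsurj
    (fun k => Sum.elim (φ₁ ⟨_, hker₁ k⟩) (φ₂ ⟨_, hker₂ k⟩)) (fun a b => ?_) (fun a b hab => ?_)
    (fun g k hk => ?_)
  · rw [← Sum.elim_add_add, ← hφ₁_mul, ← hφ₂_mul]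
    rfl
  · have h1 := funext fun j => congrFun hab (.inl j)
    have h2 := funext fun j => congrFun hab (.inr j)
    exact Subtype.ext (Subtype.ext (Prod.ext (congrArg Subtype.val (φ₁.injective h1))
      (congrArg Subtype.val (φ₂.injective h2))))
  · funext i
    cases i with
    | inl i => exact congrFun (hφ₁_conj g.1.1 ⟨_, hker₁ k⟩) i
    | inr i =>
      rw [show π g = π₂ g.1.2 from hD g.2]
      exact congrFun (hφ₂_conj g.1.2 ⟨_, hker₂ k⟩) i

end IsVHomog

namespace VHomogExtension
variable {e p : ℕ} {H V : Type} [Group H] [AddCommGroup V] {ρ : RAction H V}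

def ofIsVHomog [Module (ZMod p) V] {E : Type} [Group E] [Finite E] (π : E →* H)
    (hgen : ∃ f : Fin e → E, closure (Set.range f) = ⊤) (hπ : Surjective π)
    (homog : IsVHomog ρ π) : VHomogExtension e p H V ρ :=
  ⟨E, π, hgen, hπ, homog.mul_comm, homog.pow_eq_one, homog⟩

def self [Module (ZMod p) V] [Finite H] (hH : ∃ f : Fin e → H, closure (Set.range f) = ⊤) :
    VHomogExtension e p H V ρ :=
  ofIsVHomog (MonoidHom.id H) hH surjective_id <| by
    have : Subsingleton (MonoidHom.id H).ker := ⟨fun a b => Subtype.ext (a.2.trans b.2.symm)⟩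
    exact ⟨0, .ofBijective (fun _ => 0) ⟨fun _ _ _ => Subsingleton.elim _ _,
      fun _ => ⟨1, Subsingleton.elim _ _⟩⟩, fun _ _ => Subsingleton.elim _ _,
      fun _ _ => Subsingleton.elim _ _⟩

theorem card_le (hp : 0 < p) (C : VHomogExtension e p H V ρ) :
    Nat.card C.carrier ≤ Nat.card H * p ^ (Nat.card H * e) := by
  obtain ⟨f, hf⟩ := C.gen
  simpa using card_le_of_ker_commute_pow_eq_one C.surj hp C.ker_comm C.ker_exp hf

theorem exists_card_max (hp : 0 < p) (C₀ : VHomogExtension e p H V ρ) :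
    ∃ C : VHomogExtension e p H V ρ,
      ∀ C' : VHomogExtension e p H V ρ, Nat.card C'.carrier ≤ Nat.card C.carrier := by
  have hbdd : BddAbove (Set.range fun C : VHomogExtension e p H V ρ => Nat.card C.carrier) :=
    bddAbove_def.mpr ⟨_, Set.forall_mem_range.mpr (card_le hp)⟩
  obtain ⟨C, hC⟩ := Nat.sSup_mem (Set.range_nonempty_iff_nonempty.mpr ⟨C₀⟩) hbdd
  exact ⟨C, fun C' => (le_csSup hbdd ⟨C', rfl⟩).trans_eq hC.symm⟩

end VHomogExtension

theorem stmt_19_general (e p : ℕ) (hp : p.Prime) (H V : Type) [Group H] [Finite H]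
    [AddCommGroup V] [Module (ZMod p) V] (ρ : RAction H V)
    (hH : ∃ f : Fin e → H, Subgroup.closure (Set.range f) = ⊤)
    (hsimple : (∃ v : V, v ≠ 0) ∧
      ∀ W : Submodule (ZMod p) V, (∀ h : H, ∀ w ∈ W, ρ.act h w ∈ W) → W = ⊥ ∨ W = ⊤) :
    ∃ C : VHomogExtension e p H V ρ,
      ∀ (L : Type) [Group L] [Finite L] (τ : L →* H),
        (∃ f : Fin e → L, Subgroup.closure (Set.range f) = ⊤) →
        Function.Surjective τ →
        (∀ a b : τ.ker, a * b = b * a) →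
        (∀ k : τ.ker, k ^ p = 1) →
        IsVHomog ρ τ →
        ∃ σ : C.carrier →* L, Function.Surjective σ ∧ τ.comp σ = C.proj := by
  obtain ⟨C, hC⟩ := VHomogExtension.exists_card_max hp.pos (VHomogExtension.self (ρ := ρ) hH)
  refine ⟨C, fun L _ _ τ ⟨y₀, hy₀⟩ hτ _ _ hτ_homog => ?_⟩
  obtain ⟨x, hx⟩ := C.gen
  obtain ⟨y, hyx, hy⟩ := exists_generating_lift hτ hy₀ (closure_range_comp_eq_top C.surj hx)
  set D := closure (Set.range fun i => (x i, y i))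
  have hD := closure_pairs_le_eqLocus hyx.symm
  have hfst : Surjective ((MonoidHom.fst _ _).comp D.subtype) :=
    Subgroup.surjective_restrict_of_map_eq_top ((map_fst_closure_pairs x y).trans hx)
  have hsnd : Surjective ((MonoidHom.snd _ _).comp D.subtype) :=
    Subgroup.surjective_restrict_of_map_eq_top ((map_snd_closure_pairs x y).trans hy)
  let CD : VHomogExtension e p H V ρ :=
    .ofIsVHomog _ (exists_generating_tuple_closure_range _) (C.surj.comp hfst)
      (C.homog.comp_fst_of_le_eqLocus hsimple hτ_homog hD (C.surj.comp hfst))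
  let φ := MulEquiv.ofBijective _ (hfst.bijective_of_nat_card_le (hC CD))
  refine ⟨((MonoidHom.snd _ _).comp D.subtype).comp φ.symm.toMonoidHom,
    hsnd.comp φ.symm.surjective, MonoidHom.ext fun c => ?_⟩
  exact (hD (φ.symm c).2).symm.trans (congrArg C.proj (φ.apply_symm_apply c))

/-- **Existence of the `(V,e)`-cover.** For a finite `e`-generated group `H` and a simple
`ℤ_p[H]`-module `V` there is a finite `e`-generated extension `Ĥ → H` with
`V`-homogeneous kernel through which every finite `e`-generated extension of `H` with
`V`-homogeneous kernel factors. -/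
theorem stmt_19 (e p : ℕ) (he : 0 < e) (hp : p.Prime) (H V : Type) [Group H] [Finite H]
    [AddCommGroup V] [Module (ZMod p) V] (ρ : RAction H V)
    (hH : ∃ f : Fin e → H, Subgroup.closure (Set.range f) = ⊤)
    (hsimple : (∃ v : V, v ≠ 0) ∧
      ∀ W : Submodule (ZMod p) V, (∀ h : H, ∀ w ∈ W, ρ.act h w ∈ W) → W = ⊥ ∨ W = ⊤) :
    ∃ C : VHomogExtension e p H V ρ,
      ∀ (L : Type) [Group L] [Finite L] (τ : L →* H),
        (∃ f : Fin e → L, Subgroup.closure (Set.range f) = ⊤) →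
        Function.Surjective τ →
        (∀ a b : τ.ker, a * b = b * a) →
        (∀ k : τ.ker, k ^ p = 1) →
        IsVHomog ρ τ →
        ∃ σ : C.carrier →* L, Function.Surjective σ ∧ τ.comp σ = C.proj :=
  stmt_19_general e p hp H V ρ hH hsimple
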